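/- For every integer n > 2, the unique fixed point p_n ∈ (0,1) of P_n satisfies p_n < 1/2. -/

import Mathlib

/-!
`P_n` is continuous on `[0, 1]` with `P_n(0) = 1`. At `1/2` the duplication formula gives
`P_n(1/2) = Γ(n/2 + 1/2) / (Γ(n/2 + 1) √π)`, and log-convexity of `Γ` bounds this by
`1 / √(π n / 2)`, which is below `1/2` once `n ≥ 3`. Hence `P_n(q) - q` changes sign on
`[0, 1/2]`, and the fixed point it produces there is `p_n` by uniqueness.
-/

open Real Filter Topology

/-- Generalized binomial coefficient `binom(n, α) = n! / (Γ(α+1)·Γ(n-α+1))`. -/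
noncomputable def gbinom (n : ℕ) (a : ℝ) : ℝ :=
  (n.factorial : ℝ) / (Real.Gamma (a + 1) * Real.Gamma ((n : ℝ) - a + 1))

/-- The function `P_n(p) = binom(n, np) · p^(np) · (1-p)^(n(1-p))`. -/
noncomputable def Pn (n : ℕ) (p : ℝ) : ℝ :=
  gbinom n ((n : ℝ) * p) * p ^ ((n : ℝ) * p) * (1 - p) ^ ((n : ℝ) * (1 - p))

open Set

lemma Real.continuousAt_Gamma_of_pos {s : ℝ} (hs : 0 < s) : ContinuousAt Gamma s :=
  (differentiableAt_Gamma fun m => (hs.trans_le' (neg_nonpos.mpr m.cast_nonneg)).ne').continuousAt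

lemma continuousOn_gbinom (n : ℕ) : ContinuousOn (gbinom n) (Icc 0 n) := by
  intro a ⟨ha, han⟩
  have hpos₁ : 0 < a + 1 := by linarith
  have hpos₂ : 0 < (n : ℝ) - a + 1 := by linarith
  have hden : ContinuousAt (fun a : ℝ => Gamma (a + 1) * Gamma ((n : ℝ) - a + 1)) a :=
    ((continuousAt_Gamma_of_pos hpos₁).comp (f := fun b => b + 1) (by fun_prop)).mul
      ((continuousAt_Gamma_of_pos hpos₂).comp (f := fun b => (n : ℝ) - b + 1) (by fun_prop))
  exact (continuousAt_const.div hden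
    (mul_pos (Gamma_pos_of_pos hpos₁) (Gamma_pos_of_pos hpos₂)).ne').continuousWithinAt

lemma gbinom_zero (n : ℕ) : gbinom n 0 = 1 := by
  have hfac : Gamma ((n : ℝ) + 1) = n.factorial := by exact_mod_cast Gamma_nat_eq_factorial n
  simp [gbinom, hfac, Nat.factorial_ne_zero]

lemma rpow_mul_self_eq_exp {q : ℝ} (hq : 0 ≤ q) (c : ℝ) : q ^ (c * q) = exp (c * (q * log q)) := by
  rcases hq.eq_or_lt with rfl | hq
  · simp
  · rw [rpow_def_of_pos hq]
    ring_nf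

lemma continuousOn_rpow_mul_self (c : ℝ) : ContinuousOn (fun q : ℝ => q ^ (c * q)) (Ici 0) :=
  (continuous_exp.comp (continuous_mul_log.const_mul c)).continuousOn.congr
    fun _ hq => rpow_mul_self_eq_exp hq c

lemma continuousOn_Pn (n : ℕ) : ContinuousOn (Pn n) (Icc 0 1) := by
  have hgbinom : ContinuousOn (fun q : ℝ => gbinom n (n * q)) (Icc 0 1) :=
    (continuousOn_gbinom n).comp (by fun_prop) fun q ⟨h0, h1⟩ =>
      ⟨by positivity, mul_le_of_le_one_right n.cast_nonneg h1⟩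
  have hpow₁ : ContinuousOn (fun q : ℝ => q ^ ((n : ℝ) * q)) (Icc 0 1) :=
    (continuousOn_rpow_mul_self n).mono Icc_subset_Ici_self
  have hpow₂ : ContinuousOn (fun q : ℝ => (1 - q) ^ ((n : ℝ) * (1 - q))) (Icc 0 1) :=
    (continuousOn_rpow_mul_self n).comp (by fun_prop) fun q hq => sub_nonneg.mpr hq.2
  exact (hgbinom.mul hpow₁).mul hpow₂

lemma Pn_zero (n : ℕ) : Pn n 0 = 1 := by
  simp [Pn, gbinom_zero]

lemma Real.Gamma_add_half_le {x : ℝ} (hx : 0 < x) : Gamma (x + 1 / 2) ≤ Gamma (x + 1) / √x := by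
  have h := Gamma_mul_add_mul_le_rpow_Gamma_mul_rpow_Gamma hx (by linarith : 0 < x + 1)
    (by norm_num : (0 : ℝ) < 1 / 2) (by norm_num : (0 : ℝ) < 1 / 2) (by norm_num)
  have hA : 0 < Gamma (x + 1) := Gamma_pos_of_pos (by linarith)
  rw [show 1 / 2 * x + 1 / 2 * (x + 1) = x + 1 / 2 by ring,
    show Gamma x = Gamma (x + 1) / x by rw [Gamma_add_one hx.ne']; field_simp,
    div_rpow hA.le hx.le, div_mul_eq_mul_div, ← rpow_add hA, ← sqrt_eq_rpow] at h
  norm_num at h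
  exact h

lemma Pn_half (n : ℕ) : Pn n (1 / 2) = Gamma (n / 2 + 1 / 2) / (Gamma (n / 2 + 1) * √π) := by
  set x : ℝ := n / 2
  have hdup := Gamma_mul_Gamma_add_half (x + 1 / 2)
  rw [show x + 1 / 2 + 1 / 2 = x + 1 by ring, show 2 * (x + 1 / 2) = (n : ℝ) + 1 by ring,
    show (1 : ℝ) - (n + 1) = -n by ring, rpow_neg zero_le_two] at hdup
  have hfac : Gamma ((n : ℝ) + 1) = n.factorial := by exact_mod_cast Gamma_nat_eq_factorial n
  have hpow : (1 / 2 : ℝ) ^ ((n : ℝ) * (1 / 2)) * (1 - 1 / 2) ^ ((n : ℝ) * (1 - 1 / 2))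
      = ((2 : ℝ) ^ (n : ℝ))⁻¹ := by
    rw [show (1 : ℝ) - 1 / 2 = 1 / 2 by norm_num, ← rpow_add (by norm_num),
      show (n : ℝ) * (1 / 2) + n * (1 / 2) = n by ring, one_div, inv_rpow zero_le_two]
  have hA : 0 < Gamma (x + 1) := Gamma_pos_of_pos (by positivity)
  rw [Pn, mul_assoc, hpow, gbinom, show (n : ℝ) * (1 / 2) = x by ring,
    show (n : ℝ) - x + 1 = x + 1 by ring, ← hfac]
  have hB : Gamma (x + 1 / 2) = Gamma (n + 1) * (2 ^ (n : ℝ))⁻¹ * √π / Gamma (x + 1) := by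
    rw [← hdup]; field_simp
  rw [hB]
  field_simp

lemma Pn_half_lt_half {n : ℕ} (hn : 2 < n) : Pn n (1 / 2) < 1 / 2 := by
  have hx : (3 / 2 : ℝ) ≤ n / 2 := by
    have : (3 : ℝ) ≤ n := by exact_mod_cast hn
    linarith
  set x : ℝ := n / 2
  have hA : 0 < Gamma (x + 1) := Gamma_pos_of_pos (by positivity)
  have hsqrt : 2 < √x * √π := by
    rw [← sqrt_mul (by positivity), lt_sqrt zero_le_two]
    nlinarith [pi_gt_three]
  calc Pn n (1 / 2) = Gamma (x + 1 / 2) / (Gamma (x + 1) * √π) := Pn_half n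
    _ ≤ Gamma (x + 1) / √x / (Gamma (x + 1) * √π) := by
        gcongr
        exact Gamma_add_half_le (by positivity)
    _ = 1 / (√x * √π) := by field_simp
    _ < 1 / 2 := by gcongr

lemma exists_Pn_eq_self_lt_half {n : ℕ} (hn : 2 < n) : ∃ q ∈ Ioo (0 : ℝ) (1 / 2), Pn n q = q := by
  have hcont : ContinuousOn (fun q => Pn n q - q) (Icc 0 (1 / 2)) :=
    ((continuousOn_Pn n).mono (Icc_subset_Icc_right (by norm_num))).sub continuousOn_id
  have hsign : (0 : ℝ) ∈ Ioo (Pn n (1 / 2) - 1 / 2) (Pn n 0 - 0) := by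
    rw [Pn_zero]
    exact ⟨by linarith [Pn_half_lt_half hn], by norm_num⟩
  obtain ⟨q, hq, hfix⟩ := intermediate_value_Ioo' (by norm_num) hcont hsign
  exact ⟨q, hq, sub_eq_zero.mp hfix⟩

theorem fixed_point_lt_half_general (n : ℕ) (hn : 2 < n)
    (p : ℝ) (huniq : ∀ q ∈ Set.Ioo (0:ℝ) 1, Pn n q = q → q = p) :
    p < 1/2 := by
  obtain ⟨q, hq, hfix⟩ := exists_Pn_eq_self_lt_half hn
  rw [← huniq q ⟨hq.1, hq.2.trans (by norm_num)⟩ hfix]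
  exact hq.2

/-- For every integer `n > 2`, the unique fixed point `p ∈ (0,1)` of `P_n` satisfies
`p < 1/2`. -/
theorem fixed_point_lt_half (n : ℕ) (hn : 2 < n)
    (p : ℝ) (hp : p ∈ Set.Ioo (0:ℝ) 1) (hfix : Pn n p = p)
    (huniq : ∀ q ∈ Set.Ioo (0:ℝ) 1, Pn n q = q → q = p) :
    p < 1/2 :=
  fixed_point_lt_half_general n hn p huniq
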